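/- Let M24(I,O) be the (3,3)-pole built from three negators Ni(Ii,Oi,ri), i ∈ {1,2,3}, arranged cyclically with Oi joined to I_{i+1} (indices mod 3), where one edge of each junction between Ni and N_{i+1} is subdivided by a vertex vi carrying a dangling edge ei, and the ordered connectors are I = (r1,r2,r3) and O = (e3,e1,e2). Then every element of Col(M24) has the form (a,b,c,a',b',c') where (a',b',c') is a nontrivial cyclic permutation of (a,b,c) — namely (b,c,a) or (c,a,b). Consequently, M24 is colour-disjoint from the Isaacs (3,3)-pole Y3 (three linked copies of the Isaacs block Y), and hence the junction M24 * Y3 is a snark. -/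
import Mathlib


/-- The Klein four-group `Z₂ × Z₂`; Tait colourings use its three nonzero
elements as colours. -/
abbrev Klein : Type := ZMod 2 × ZMod 2

/-- The colouring set of a 5-pole, as a predicate on the colours of its five
semiedges. -/
abbrev Pred5 : Type := Klein → Klein → Klein → Klein → Klein → Prop

/-- The colouring set of a 6-pole, as a predicate on the colours of its six
semiedges. -/
abbrev Pred6 : Type := Klein → Klein → Klein → Klein → Klein → Klein → Prop

/-- The defining property of colourings `(i₁,i₂,o₁,o₂,r)` of a negator
`N(I,O,r)`: all colours are nonzero and exactly one of the flows through
`I = {i₁,i₂}` and `O = {o₁,o₂}` is zero, the nonzero one being equal to the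
colour of the residual semiedge `r`. -/
def NegC (i1 i2 o1 o2 r : Klein) : Prop :=
  i1 ≠ 0 ∧ i2 ≠ 0 ∧ o1 ≠ 0 ∧ o2 ≠ 0 ∧ r ≠ 0 ∧
    ((i1 + i2 = 0 ∧ o1 + o2 ≠ 0 ∧ o1 + o2 = r) ∨
     (o1 + o2 = 0 ∧ i1 + i2 ≠ 0 ∧ i1 + i2 = r))

/-- `N` is (the colouring set of) a negator `N(I,O,r)`. -/
def IsNegator (N : Pred5) : Prop :=
  ∀ i1 i2 o1 o2 r, N i1 i2 o1 o2 r → NegC i1 i2 o1 o2 r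

/-- `N` is a perfect negator: its colouring set is the full set `NegC`. -/
def IsPerfectNegator (N : Pred5) : Prop :=
  ∀ i1 i2 o1 o2 r, N i1 i2 o1 o2 r ↔ NegC i1 i2 o1 o2 r

/-- The defining property of colourings `(b₁,b₂,c₁,c₂,c₃)` of a proper
`(2,3)`-pole `T(B,C)`: the flows through `B` and `C` agree and are nonzero. -/
def P23C (b1 b2 c1 c2 c3 : Klein) : Prop :=
  b1 ≠ 0 ∧ b2 ≠ 0 ∧ c1 ≠ 0 ∧ c2 ≠ 0 ∧ c3 ≠ 0 ∧
    b1 + b2 = c1 + c2 + c3 ∧ b1 + b2 ≠ 0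

/-- `T` is (the colouring set of) a proper `(2,3)`-pole. -/
def IsProper23 (T : Pred5) : Prop :=
  ∀ b1 b2 c1 c2 c3, T b1 b2 c1 c2 c3 → P23C b1 b2 c1 c2 c3

/-- `T` is a perfect proper `(2,3)`-pole: its colouring set is all of `P23C`. -/
def IsPerfect23 (T : Pred5) : Prop :=
  ∀ b1 b2 c1 c2 c3, T b1 b2 c1 c2 c3 ↔ P23C b1 b2 c1 c2 c3

/-- The colouring set of the path `P₂` of length two with dangling edges
retained, the semiedges listed as (two at one endvertex, two at the other
endvertex, one at the middle vertex). -/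
def P2C (a b c d e : Klein) : Prop :=
  a ≠ 0 ∧ b ≠ 0 ∧ c ≠ 0 ∧ d ≠ 0 ∧ e ≠ 0 ∧ a ≠ b ∧ c ≠ d ∧ a + b + c + d + e = 0

/-- The colouring set of the disconnected `(2,3)`-pole `M_ev` consisting of an
isolated edge (semiedges `x₁,x₂`) and a single vertex with three dangling
edges (semiedges `a,b,c`). -/
def MevC (x1 x2 a b c : Klein) : Prop :=
  x1 ≠ 0 ∧ x2 ≠ 0 ∧ a ≠ 0 ∧ b ≠ 0 ∧ c ≠ 0 ∧ x1 = x2 ∧ a + b + c = 0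

/-- The colouring set of the `(2,2,2)`-pole `V₄` consisting of a vertex and its
three neighbours, each carrying two dangling edges; the `i`-th connector has
semiedge colours `aᵢ, bᵢ`. -/
def V4C (a1 b1 a2 b2 a3 b3 : Klein) : Prop :=
  a1 ≠ 0 ∧ b1 ≠ 0 ∧ a2 ≠ 0 ∧ b2 ≠ 0 ∧ a3 ≠ 0 ∧ b3 ≠ 0 ∧
    a1 ≠ b1 ∧ a2 ≠ b2 ∧ a3 ≠ b3 ∧ a1 + b1 + a2 + b2 + a3 + b3 = 0

/-- The colouring set of the Isaacs `(3,3)`-pole `Y(I,O)` with ordered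
connectors `I = (i₁,i₂,i₃)`, `O = (o₁,o₂,o₃)`: it arises from `K₃,₃` by
deleting two vertices of one partite set; the remaining vertices carry the
adjacent pairs `{i₁,o₂}`, `{i₂,o₁}`, `{i₃,o₃}` together with the internal edges
`g₁, g₂, g₃` meeting at the fourth vertex. -/
def Ycol (i1 i2 i3 o1 o2 o3 : Klein) : Prop :=
  ∃ g1 g2 g3 : Klein,
    i1 ≠ 0 ∧ i2 ≠ 0 ∧ i3 ≠ 0 ∧ o1 ≠ 0 ∧ o2 ≠ 0 ∧ o3 ≠ 0 ∧
    g1 ≠ 0 ∧ g2 ≠ 0 ∧ g3 ≠ 0 ∧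
    i1 + o2 + g1 = 0 ∧ i2 + o1 + g2 = 0 ∧ i3 + o3 + g3 = 0 ∧ g1 + g2 + g3 = 0

/-- The colouring set of the `(3,3)`-pole `Y₃`: three copies of `Y` joined in
order (`O` of one to `I` of the next, following the order of the semiedges). -/
def Y3col (i1 i2 i3 o1 o2 o3 : Klein) : Prop :=
  ∃ m1 m2 m3 n1 n2 n3 : Klein,
    Ycol i1 i2 i3 m1 m2 m3 ∧ Ycol m1 m2 m3 n1 n2 n3 ∧ Ycol n1 n2 n3 o1 o2 o3

/-- The colouring set of the `(3,3)`-pole `M₂₄(I,O)` of Class 36-A: three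
negators `Nᵢ` (with semiedge colours `(aᵢ,bᵢ,cᵢ,dᵢ,xᵢ)`, `xᵢ` the residual
colour) arranged cyclically, `Oᵢ` joined to `I_{i+1}` — one semiedge pair
directly (`cᵢ = a_{i+1}`), the other through a subdivision vertex `vᵢ`
carrying a dangling edge `gᵢ` (so `dᵢ + gᵢ + b_{i+1} = 0`).  The ordered
connectors are `I = (x₁,x₂,x₃)` and `O = (y₁,y₂,y₃) = (g₂,g₃,g₁)`. -/
def M24col (N1 N2 N3 : Pred5) (x1 x2 x3 y1 y2 y3 : Klein) : Prop :=
  ∃ a1 b1 c1 d1 a2 b2 c2 d2 a3 b3 c3 d3 : Klein,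
    N1 a1 b1 c1 d1 x1 ∧ N2 a2 b2 c2 d2 x2 ∧ N3 a3 b3 c3 d3 x3 ∧
    c1 = a2 ∧ c2 = a3 ∧ c3 = a1 ∧
    y3 ≠ 0 ∧ d1 + y3 + b2 = 0 ∧
    y1 ≠ 0 ∧ d2 + y1 + b3 = 0 ∧
    y2 ≠ 0 ∧ d3 + y2 + b1 = 0


/-- Auxiliary parity invariant on triples of Klein colours: the set of triples
of "parity one" (it is closed under cyclic shifts, and every `Y`-step flips
the parity). -/
def M24f (a b c : Klein) : ZMod 2 :=
  if (a, b, c) ∈ ([((0,1),(1,1),(1,0)), ((0,1),(1,1),(1,1)), ((1,0),(0,1),(1,1)),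
      ((1,0),(1,0),(1,1)), ((1,0),(1,1),(1,0)), ((1,0),(1,1),(1,1)),
      ((1,1),(0,1),(1,1)), ((1,1),(1,0),(0,1)), ((1,1),(1,0),(1,0)),
      ((1,1),(1,0),(1,1)), ((1,1),(1,1),(0,1)), ((1,1),(1,1),(1,0))] :
      List (Klein × Klein × Klein)) then 1 else 0

lemma M24f_cyc : ∀ a b c : Klein, M24f b c a = M24f a b c := by decide

lemma M24_solveLast : ∀ a b c : Klein, a + b + c = 0 → c = a + b := by decide

lemma M24f_stepQF : ∀ i1 i2 i3 o1 o2 o3 : Klein,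
    (i1 ≠ 0 ∧ i2 ≠ 0 ∧ i3 ≠ 0 ∧ o1 ≠ 0 ∧ o2 ≠ 0 ∧ o3 ≠ 0 ∧
    i1 + o2 ≠ 0 ∧ i2 + o1 ≠ 0 ∧ i3 + o3 ≠ 0 ∧
    i1 + o2 + (i2 + o1) + (i3 + o3) = 0) →
    M24f o1 o2 o3 = M24f i1 i2 i3 + 1 := by decide

lemma M24f_Ystep {i1 i2 i3 o1 o2 o3 : Klein} (h : Ycol i1 i2 i3 o1 o2 o3) :
    M24f o1 o2 o3 = M24f i1 i2 i3 + 1 := by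
  obtain ⟨g1, g2, g3, hi1, hi2, hi3, ho1, ho2, ho3, hg1, hg2, hg3, e1, e2, e3, e4⟩ := h
  have k1 : g1 = i1 + o2 := M24_solveLast _ _ _ e1
  have k2 : g2 = i2 + o1 := M24_solveLast _ _ _ e2
  have k3 : g3 = i3 + o3 := M24_solveLast _ _ _ e3
  subst k1; subst k2; subst k3
  exact M24f_stepQF i1 i2 i3 o1 o2 o3 ⟨hi1, hi2, hi3, ho1, ho2, ho3, hg1, hg2, hg3, e4⟩

lemma M24_caseL : ∀ a2 b2 c1 d1 x1 y3 : Klein, a2 + b2 = 0 → c1 + d1 = x1 →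
    c1 = a2 → d1 + y3 + b2 = 0 → y3 = x1 := by decide

lemma M24_caseR : ∀ a2 b2 c1 d1 x2 y3 : Klein, c1 + d1 = 0 → a2 + b2 = x2 →
    c1 = a2 → d1 + y3 + b2 = 0 → y3 = x2 := by decide

/-- **Class 36-A.**  For negators `N₁, N₂, N₃`, every element of
`Col(M₂₄(I,O))` has the form `(a,b,c,a',b',c')` where `(a',b',c')` is a
nontrivial cyclic permutation of `(a,b,c)`, namely `(b,c,a)` or `(c,a,b)`.
Consequently `M₂₄` is colour-disjoint from the Isaacs `(3,3)`-pole `Y₃`, and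
hence the junction `M₂₄ * Y₃` is a snark. -/
theorem class_36A (N1 N2 N3 : Pred5)
    (h1 : IsNegator N1) (h2 : IsNegator N2) (h3 : IsNegator N3) :
    (∀ x1 x2 x3 y1 y2 y3, M24col N1 N2 N3 x1 x2 x3 y1 y2 y3 →
       ((y1 = x2 ∧ y2 = x3 ∧ y3 = x1) ∨ (y1 = x3 ∧ y2 = x1 ∧ y3 = x2))) ∧
    (∀ x1 x2 x3 y1 y2 y3, M24col N1 N2 N3 x1 x2 x3 y1 y2 y3 →
       ¬ Y3col x1 x2 x3 y1 y2 y3) := by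
  have key : ∀ x1 x2 x3 y1 y2 y3, M24col N1 N2 N3 x1 x2 x3 y1 y2 y3 →
      ((y1 = x2 ∧ y2 = x3 ∧ y3 = x1) ∨ (y1 = x3 ∧ y2 = x1 ∧ y3 = x2)) := by
    intro x1 x2 x3 y1 y2 y3 hM
    obtain ⟨a1, b1, c1, d1, a2, b2, c2, d2, a3, b3, c3, d3,
      hN1, hN2, hN3, j1, j2, j3, hy3, e3, hy1, e1, hy2, e2⟩ := hM
    obtain ⟨-, -, -, -, -, H1⟩ := h1 _ _ _ _ _ hN1
    obtain ⟨-, -, -, -, -, H2⟩ := h2 _ _ _ _ _ hN2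
    obtain ⟨-, -, -, -, -, H3⟩ := h3 _ _ _ _ _ hN3
    rcases H1 with ⟨hI1, -, hO1⟩ | ⟨hO1, -, hI1⟩ <;>
      rcases H2 with ⟨hI2, -, hO2⟩ | ⟨hO2, -, hI2⟩ <;>
        rcases H3 with ⟨hI3, -, hO3⟩ | ⟨hO3, -, hI3⟩
    · exact Or.inl ⟨M24_caseL a3 b3 c2 d2 x2 y1 hI3 hO2 j2 e1,
        M24_caseL a1 b1 c3 d3 x3 y2 hI1 hO3 j3 e2,
        M24_caseL a2 b2 c1 d1 x1 y3 hI2 hO1 j1 e3⟩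
    · exact absurd (M24_caseR a1 b1 c3 d3 0 y2 hO3 hI1 j3 e2) hy2
    · exact absurd (M24_caseR a3 b3 c2 d2 0 y1 hO2 hI3 j2 e1) hy1
    · exact absurd (M24_caseR a1 b1 c3 d3 0 y2 hO3 hI1 j3 e2) hy2
    · exact absurd (M24_caseR a2 b2 c1 d1 0 y3 hO1 hI2 j1 e3) hy3
    · exact absurd (M24_caseR a2 b2 c1 d1 0 y3 hO1 hI2 j1 e3) hy3
    · exact absurd (M24_caseR a3 b3 c2 d2 0 y1 hO2 hI3 j2 e1) hy1
    · exact Or.inr ⟨M24_caseR a3 b3 c2 d2 x3 y1 hO2 hI3 j2 e1,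
        M24_caseR a1 b1 c3 d3 x1 y2 hO3 hI1 j3 e2,
        M24_caseR a2 b2 c1 d1 x2 y3 hO1 hI2 j1 e3⟩
  refine ⟨key, ?_⟩
  intro x1 x2 x3 y1 y2 y3 hM hY
  obtain ⟨m1, m2, m3, n1, n2, n3, hA, hB, hC⟩ := hY
  have hf : M24f y1 y2 y3 = M24f x1 x2 x3 + 1 := by
    rw [M24f_Ystep hC, M24f_Ystep hB, M24f_Ystep hA,
      add_assoc (M24f x1 x2 x3 + 1)]
    norm_num
    decide
  rcases key x1 x2 x3 y1 y2 y3 hM with ⟨r1, r2, r3⟩ | ⟨r1, r2, r3⟩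
  · rw [r1, r2, r3, M24f_cyc x1 x2 x3] at hf
    exact one_ne_zero (left_eq_add.mp hf)
  · rw [r1, r2, r3, M24f_cyc x2 x3 x1, M24f_cyc x1 x2 x3] at hf
    exact one_ne_zero (left_eq_add.mp hf)
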